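/- Let n be a nonempty finite index type, A : Matrix n n ℝ, and Q, R : Matrix n n ℝ symmetric positive definite. Let ρ(A) denote the spectral radius of A and define c(j) := Tr(Q · ∑_{i=1}^{j} A^{i−1} R (Aᵀ)^{i−1}). Let p ∈ (0,1) satisfy p · ρ(A)⁴ < 1 (equivalently √p · ρ(A)² < 1). Then the series ∑_{i=1}^{∞} i^5 · c(2i) · p^i converges. -/

import Mathlib

open Matrix

/-- The spectral radius of a real square matrix: the supremum of the moduli of its
complex eigenvalues. -/
noncomputable def specRad {n : Type*} [Fintype n] [DecidableEq n]
    (A : Matrix n n ℝ) : ℝ :=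
  sSup {r : ℝ | ∃ μ : ℂ, r = ‖μ‖ ∧
    ∃ v : n → ℂ, v ≠ 0 ∧ (A.map Complex.ofReal).mulVec v = μ • v}

/-!
By Gelfand's formula, `p ρ(A)⁴ < 1` yields some `s ≥ 1` with `p s⁴ < 1` and `‖A ^ k‖ ≤ C s ^ k`
for all `k`. Each of the `2m` summands `A ^ l R (Aᵀ) ^ l` of the `m`-th inner sum then has norm at
most `C² ‖R‖ s ^ (4m)`, and `X ↦ Tr (Q X)` is a bounded linear functional, so the `m`-th term of
the series is `O(m⁶ (p s⁴) ^ m)`, which is summable.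
-/

open Filter Finset NNReal
open scoped Matrix.Norms.Frobenius

section

variable {n : Type*} [Fintype n] [DecidableEq n]

theorem Matrix.mem_spectrum_iff_exists_mulVec_eq_smul {K : Type*} [Field K] {B : Matrix n n K}
    {μ : K} : μ ∈ spectrum K B ↔ ∃ v, v ≠ 0 ∧ B *ᵥ v = μ • v := by
  rw [← spectrum_toLin', ← Module.End.hasEigenvalue_iff_mem_spectrum,
    Module.End.hasEigenvalue_iff, Submodule.ne_bot_iff]
  simp only [Module.End.mem_eigenspace_iff, toLin'_apply]
  tauto

theorem specRad_eq_sSup_norm_spectrum (A : Matrix n n ℝ) :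
    specRad A = sSup (norm '' spectrum ℂ (A.map Complex.ofReal)) := by
  simp only [specRad]
  congr 1
  ext r
  simp only [Set.mem_image, Matrix.mem_spectrum_iff_exists_mulVec_eq_smul]
  exact ⟨fun ⟨μ, hr, hμ⟩ => ⟨μ, hμ, hr.symm⟩, fun ⟨μ, hμ, hr⟩ => ⟨μ, hr.symm, hμ⟩⟩

theorem norm_le_specRad {A : Matrix n n ℝ} {μ : ℂ} (hμ : μ ∈ spectrum ℂ (A.map Complex.ofReal)) :
    ‖μ‖ ≤ specRad A := by
  rw [specRad_eq_sSup_norm_spectrum]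
  exact le_csSup ((Matrix.finite_spectrum _).image _).bddAbove (Set.mem_image_of_mem _ hμ)

theorem spectralRadius_map_ofReal_lt_of_specRad_lt [Nonempty n] {A : Matrix n n ℝ} {s : ℝ≥0}
    (h : specRad A < s) : spectralRadius ℂ (A.map Complex.ofReal) < s :=
  spectrum.spectralRadius_lt_of_forall_lt_of_nonempty (spectrum.nonempty _) fun _ hμ =>
    (norm_le_specRad hμ).trans_lt h

theorem spectrum.exists_norm_pow_le_of_spectralRadius_lt {A : Type*} [NormedRing A]
    [NormedAlgebra ℂ A] [CompleteSpace A] {a : A} {s : ℝ≥0} (h : spectralRadius ℂ a < s) :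
    ∃ C, ∀ k : ℕ, ‖a ^ k‖ ≤ C * s ^ k := by
  have hs : s ≠ 0 := by rintro rfl; exact not_lt_zero h
  have hbound : ∀ᶠ k : ℕ in atTop, ‖a ^ k‖ ≤ 1 * ‖(s : ℝ) ^ k‖ := by
    filter_upwards [(pow_nnnorm_pow_one_div_tendsto_nhds_spectralRadius a).eventually_lt_const h,
      eventually_ge_atTop 1] with k hk hk1
    rw [one_div, ENNReal.rpow_inv_lt_iff (by positivity), ENNReal.rpow_natCast] at hk
    have : ‖a ^ k‖₊ < s ^ k := mod_cast hk
    simpa using (NNReal.coe_lt_coe.mpr this).le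
  obtain ⟨C, hC⟩ := (Asymptotics.isBigO_nat_atTop_iff fun k hk =>
    absurd hk (pow_ne_zero k (NNReal.coe_ne_zero.mpr hs))).mp (.of_bound 1 hbound)
  exact ⟨C, fun k => by simpa using hC k⟩

theorem exists_norm_pow_le_of_specRad_lt [Nonempty n] {A : Matrix n n ℝ} {s : ℝ≥0}
    (h : specRad A < s) : ∃ C, ∀ k : ℕ, ‖A ^ k‖ ≤ C * s ^ k := by
  have hlt := spectralRadius_map_ofReal_lt_of_specRad_lt h
  obtain ⟨C, hC⟩ := spectrum.exists_norm_pow_le_of_spectralRadius_lt (A := Matrix n n ℂ) hlt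
  refine ⟨C, fun k => ?_⟩
  have hmap : (A ^ k).map Complex.ofReal = A.map Complex.ofReal ^ k :=
    Matrix.map_pow A Complex.ofRealHom k
  simpa only [← hmap, Matrix.frobenius_norm_map_eq _ _ Complex.norm_real] using hC k

theorem exists_one_le_lt_mul_pow_lt_one {p ρ : ℝ} (hp : p < 1) (k : ℕ) (h : p * ρ ^ k < 1) :
    ∃ s, 1 ≤ s ∧ ρ < s ∧ p * s ^ k < 1 := by
  have hmax : p * max 1 ρ ^ k < 1 := by
    rcases le_total 1 ρ with hρ | hρ
    · rwa [max_eq_right hρ]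
    · rwa [max_eq_left hρ, one_pow, mul_one]
  obtain ⟨s, hs, hps⟩ := ((continuous_const.mul (continuous_pow k)).tendsto (max 1 ρ)
    |>.eventually (gt_mem_nhds hmax)).exists_gt
  exact ⟨s, (le_max_left 1 ρ).trans hs.le, (le_max_right 1 ρ).trans_lt hs, hps⟩

theorem Matrix.norm_sum_pow_mul_mul_transpose_pow_le {𝕜 : Type*} [RCLike 𝕜] {A : Matrix n n 𝕜}
    (R : Matrix n n 𝕜) {C s : ℝ} (hs : 1 ≤ s) (hA : ∀ k : ℕ, ‖A ^ k‖ ≤ C * s ^ k) (N : ℕ) :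
    ‖∑ l ∈ range N, A ^ l * R * Aᵀ ^ l‖ ≤ N * (C ^ 2 * ‖R‖ * s ^ (2 * N)) := by
  calc ‖∑ l ∈ range N, A ^ l * R * Aᵀ ^ l‖
      ≤ ∑ l ∈ range N, ‖A ^ l * R * Aᵀ ^ l‖ := norm_sum_le _ _
    _ ≤ ∑ _l ∈ range N, C ^ 2 * ‖R‖ * s ^ (2 * N) := sum_le_sum fun l hl => ?_
    _ = N * (C ^ 2 * ‖R‖ * s ^ (2 * N)) := by rw [sum_const, card_range, nsmul_eq_mul]
  have hCs : 0 ≤ C * s ^ l := (norm_nonneg _).trans (hA l)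
  calc ‖A ^ l * R * Aᵀ ^ l‖ ≤ ‖A ^ l‖ * ‖R‖ * ‖A ^ l‖ := by
        rw [← transpose_pow]
        calc ‖A ^ l * R * (A ^ l)ᵀ‖ ≤ ‖A ^ l * R‖ * ‖(A ^ l)ᵀ‖ := norm_mul_le _ _
          _ ≤ ‖A ^ l‖ * ‖R‖ * ‖A ^ l‖ := by
            rw [frobenius_norm_transpose]
            gcongr
            exact norm_mul_le _ _
    _ ≤ C * s ^ l * ‖R‖ * (C * s ^ l) := by gcongr <;> exact hA l
    _ = C ^ 2 * ‖R‖ * s ^ (2 * l) := by ring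
    _ ≤ C ^ 2 * ‖R‖ * s ^ (2 * N) := by
        gcongr
        exact (mem_range.mp hl).le

theorem Matrix.exists_norm_trace_mul_le {𝕜 : Type*} [RCLike 𝕜] (Q : Matrix n n 𝕜) :
    ∃ K, 0 < K ∧ ∀ X : Matrix n n 𝕜, ‖(Q * X).trace‖ ≤ K * ‖X‖ :=
  let L : Matrix n n 𝕜 →ₗ[𝕜] 𝕜 := traceLinearMap n 𝕜 𝕜 ∘ₗ LinearMap.mulLeft 𝕜 Q
  SemilinearMapClass.bound_of_continuous L (LinearMap.continuous_of_finiteDimensional L)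

end

theorem naive_policy_dominating_series_summable_general
    {n : Type*} [Fintype n] [Nonempty n] [DecidableEq n]
    (A Q R : Matrix n n ℝ)
    (p : ℝ) (hp : p ∈ Set.Ioo (0 : ℝ) 1) (hρ : p * specRad A ^ 4 < 1) :
    Summable (fun i : ℕ =>
      ((i + 1 : ℕ) : ℝ) ^ 5
        * (Q * ∑ l ∈ Finset.range (2 * (i + 1)), A ^ l * R * (Aᵀ) ^ l).trace
        * p ^ (i + 1)) := by
  obtain ⟨hp0, hp1⟩ := hp
  obtain ⟨s, hs1, hρs, hps⟩ := exists_one_le_lt_mul_pow_lt_one hp1 4 hρ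
  lift s to ℝ≥0 using zero_le_one.trans hs1
  obtain ⟨C, hC⟩ := exists_norm_pow_le_of_specRad_lt hρs
  obtain ⟨K, hK0, hK⟩ := Matrix.exists_norm_trace_mul_le Q
  have hr : ‖p * (s : ℝ) ^ 4‖ < 1 := by rwa [Real.norm_of_nonneg (by positivity)]
  have hgeom : Summable fun m : ℕ => K * (2 * (C ^ 2 * ‖R‖)) * ((m : ℝ) ^ 6 * (p * s ^ 4) ^ m) :=
    (summable_pow_mul_geometric_of_norm_lt_one 6 hr).mul_left _
  refine ((_root_.summable_nat_add_iff 1).mpr hgeom).of_norm_bounded fun i => ?_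
  have htrace := hK (∑ l ∈ range (2 * (i + 1)), A ^ l * R * Aᵀ ^ l)
  have hsum := Matrix.norm_sum_pow_mul_mul_transpose_pow_le R hs1 hC (2 * (i + 1))
  rw [norm_mul, norm_mul, norm_pow, norm_pow, Real.norm_natCast, Real.norm_of_nonneg hp0.le]
  calc _ ≤ ((i + 1 : ℕ) : ℝ) ^ 5
          * (K * ((2 * (i + 1) : ℕ) * (C ^ 2 * ‖R‖ * s ^ (2 * (2 * (i + 1)))))) * p ^ (i + 1) := by
        gcongr
        exact htrace.trans (mul_le_mul_of_nonneg_left hsum hK0.le)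
    _ = _ := by push_cast; ring

/-- If `p ∈ (0,1)` with `p · ρ(A)⁴ < 1`, then the series
`∑_{i ≥ 1} i^5 c(2i) p^i` converges, where
`c(j) = Tr(Q · ∑_{i=1}^{j} A^{i-1} R (Aᵀ)^{i-1})`. -/
theorem naive_policy_dominating_series_summable
    {n : Type*} [Fintype n] [Nonempty n] [DecidableEq n]
    (A Q R : Matrix n n ℝ) (hQ : Q.PosDef) (hR : R.PosDef)
    (p : ℝ) (hp : p ∈ Set.Ioo (0 : ℝ) 1) (hρ : p * specRad A ^ 4 < 1) :
    Summable (fun i : ℕ =>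
      ((i + 1 : ℕ) : ℝ) ^ 5
        * (Q * ∑ l ∈ Finset.range (2 * (i + 1)), A ^ l * R * (Aᵀ) ^ l).trace
        * p ^ (i + 1)) :=
  naive_policy_dominating_series_summable_general A Q R p hp hρ
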